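/- arXiv:2402.10017 — 3 statements merged into one kernel-verified Lean document; each statement's English description precedes it below -/
import Mathlib

section
/- The cover pebbling number of the d-dimensional hypercube Q^d is 3^d. -/
open SimpleGraph

variable {V : Type*}

/-- A single pebbling move: remove two pebbles from `u`, add one to a neighbor `v`. -/
def PebblingMove (G : SimpleGraph V) (c c' : V → ℕ) : Prop :=
  ∃ u v, G.Adj u v ∧ 2 ≤ c u ∧
    c' u = c u - 2 ∧ c' v = c v + 1 ∧ ∀ w, w ≠ u → w ≠ v → c' w = c w

/-- `c'` is reachable from `c` by a sequence of pebbling moves. -/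
def PebblingReach (G : SimpleGraph V) (c c' : V → ℕ) : Prop :=
  Relation.ReflTransGen (PebblingMove G) c c'

/-- A configuration is `t`-fold `r`-solvable if some sequence of pebbling moves
places at least `t` pebbles on `r`. -/
def PebblingSolvable (G : SimpleGraph V) (c : V → ℕ) (r : V) (t : ℕ) : Prop :=
  ∃ c', PebblingReach G c c' ∧ t ≤ c' r

variable [Fintype V]

/-- The set of sizes `m` such that every configuration of size `m` is
`t`-fold `r`-solvable for every target `r`. -/
def pebblingSet (G : SimpleGraph V) (t : ℕ) : Set ℕ :=
  {m | ∀ c : V → ℕ, (∑ v, c v) = m → ∀ r : V, PebblingSolvable G c r t}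

/-- The `t`-fold pebbling number, as an extended natural number
(`⊤` when no bound exists, e.g. for disconnected graphs). -/
noncomputable def pebblingNumber (G : SimpleGraph V) (t : ℕ) : ℕ∞ :=
  sInf ((↑) '' pebblingSet G t)

/-- A configuration is cover-solvable if pebbling moves can reach a configuration
with at least one pebble on every vertex. -/
def IsCoverSolvable (G : SimpleGraph V) (c : V → ℕ) : Prop :=
  ∃ c', PebblingReach G c c' ∧ ∀ v : V, 1 ≤ c' v

/-- The cover pebbling number. -/
noncomputable def coverPebblingNumber (G : SimpleGraph V) : ℕ∞ :=
  sInf ((↑) '' {m : ℕ | ∀ c : V → ℕ, (∑ v, c v) = m → IsCoverSolvable G c})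

/-- The optimal pebbling number: the least size of a single configuration that is
`r`-solvable for every vertex `r`. -/
noncomputable def optimalPebblingNumber (G : SimpleGraph V) : ℕ∞ :=
  sInf ((↑) '' {m : ℕ | ∃ c : V → ℕ, (∑ v, c v) = m ∧ ∀ r : V, PebblingSolvable G c r 1})

/-- The `d`-dimensional hypercube graph. -/
def cubeGraph (d : ℕ) : SimpleGraph (Fin d → Bool) :=
  SimpleGraph.fromRel (fun x y => (Finset.univ.filter fun i => x i ≠ y i).card = 1)

/-!
Weight a vertex `v` of `Q^d` by `2 ^ |v|`, where `|v|` is its Hamming distance from the all-false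
vertex. A move loses two pebbles at `u` and gains one at a neighbour of weight at most `2 ^ (|u| + 1)`,
so the weighted pebble count never increases. Hence `m` pebbles on the all-false vertex, of weight
`m`, can only be spread over all vertices if `m ≥ ∑ v, 2 ^ |v| = 3 ^ d`.

Conversely `Q^(d+1) ≅ K₂ □ Q^d`. Out of `3 · 3^d` pebbles, the richer copy of `Q^d` can send pebbles
across the matching, two for one, until both copies hold `3^d`; then each copy is covered by induction.
-/

open Finset Function

section Pebbling

variable {α β : Type*} {G : SimpleGraph α} {H : SimpleGraph β}

def pebbleStep [DecidableEq α] (c : α → ℕ) (u v : α) : α → ℕ :=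
  update (update c u (c u - 2)) v (c v + 1)

theorem pebblingMove_iff [DecidableEq α] {c c' : α → ℕ} :
    PebblingMove G c c' ↔ ∃ u v, G.Adj u v ∧ 2 ≤ c u ∧ c' = pebbleStep c u v := by
  constructor
  · rintro ⟨u, v, huv, hu, hcu, hcv, hc⟩
    refine ⟨u, v, huv, hu, funext fun x => ?_⟩
    by_cases hxv : x = v
    · subst hxv; simp [pebbleStep, hcv]
    by_cases hxu : x = u
    · subst hxu; simp [pebbleStep, hxv, hcu]
    · simp [pebbleStep, hxu, hxv, hc x hxu hxv]
  · rintro ⟨u, v, huv, hu, rfl⟩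
    exact ⟨u, v, huv, hu, by simp [pebbleStep, huv.ne], by simp [pebbleStep],
      fun x hxu hxv => by simp [pebbleStep, hxu, hxv]⟩

theorem sum_pebbleStep_mul_add [Fintype α] [DecidableEq α] {c : α → ℕ} {u v : α}
    (huv : u ≠ v) (hu : 2 ≤ c u) (w : α → ℕ) :
    ∑ x, pebbleStep c u v x * w x + 2 * w u = ∑ x, c x * w x + w v := by
  have hpoint : ∀ x, pebbleStep c u v x * w x + (if x = u then 2 * w u else 0) =
      c x * w x + (if x = v then w v else 0) := by
    intro x
    by_cases hxv : x = v
    · subst hxv; simp [pebbleStep, huv.symm, add_mul]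
    by_cases hxu : x = u
    · subst hxu; simp [pebbleStep, hxv, ← add_mul, Nat.sub_add_cancel hu]
    · simp [pebbleStep, hxu, hxv]
  simpa [sum_add_distrib] using sum_congr (s₁ := univ) rfl fun x _ => hpoint x

theorem PebblingMove.map {c : β → ℕ} {e : α → ℕ} (φ : G ↪g H)
    (h : PebblingMove G (c ∘ φ) e) :
    ∃ c', PebblingMove H c c' ∧ c' ∘ φ = e ∧ ∀ y ∉ Set.range φ, c' y = c y := by
  classical
  obtain ⟨u, v, huv, hu, rfl⟩ := pebblingMove_iff.mp h
  refine ⟨pebbleStep c (φ u) (φ v), pebblingMove_iff.mpr ⟨_, _, φ.map_adj_iff.mpr huv, hu, rfl⟩,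
    ?_, fun y hy => ?_⟩
  · simp only [pebbleStep, update_comp_eq_of_injective _ φ.injective, comp_apply]
  · have hne : ∀ x, y ≠ φ x := fun x hx => hy ⟨x, hx.symm⟩
    simp [pebbleStep, hne]

theorem PebblingReach.map {c : β → ℕ} {e : α → ℕ} (φ : G ↪g H)
    (h : PebblingReach G (c ∘ φ) e) :
    ∃ c', PebblingReach H c c' ∧ c' ∘ φ = e ∧ ∀ y ∉ Set.range φ, c' y = c y := by
  induction h with
  | refl => exact ⟨c, .refl, rfl, fun _ _ => rfl⟩
  | tail _ hstep ih =>
    obtain ⟨c₁, hreach, rfl, hout₁⟩ := ih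
    obtain ⟨c₂, hmove, rfl, hout₂⟩ := hstep.map φ
    exact ⟨c₂, hreach.tail hmove, rfl, fun y hy => (hout₂ y hy).trans (hout₁ y hy)⟩

theorem IsCoverSolvable.of_iso [Fintype α] [Fintype β] {c : β → ℕ} (φ : G ≃g H)
    (h : IsCoverSolvable G (c ∘ φ)) : IsCoverSolvable H c := by
  obtain ⟨e, hreach, hcover⟩ := h
  obtain ⟨c', hreach', hc', -⟩ := PebblingReach.map φ.toEmbedding hreach
  rw [← hc'] at hcover
  refine ⟨c', hreach', fun y => ?_⟩
  obtain ⟨x, rfl⟩ := φ.surjective y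
  exact hcover x

end Pebbling

section Bounds

variable {α : Type*} [Fintype α] {G : SimpleGraph α}

theorem PebblingReach.sum_mul_le {w : α → ℕ} (hw : ∀ u v, G.Adj u v → w v ≤ 2 * w u)
    {c c' : α → ℕ} (h : PebblingReach G c c') : ∑ x, c' x * w x ≤ ∑ x, c x * w x := by
  classical
  induction h with
  | refl => exact le_rfl
  | tail _ hstep ih =>
    obtain ⟨u, v, huv, hu, rfl⟩ := pebblingMove_iff.mp hstep
    have := sum_pebbleStep_mul_add huv.ne hu w
    have := hw u v huv
    omega

theorem sum_le_coverPebblingNumber {w : α → ℕ} (hw : ∀ u v, G.Adj u v → w v ≤ 2 * w u)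
    {r : α} (hr : w r = 1) : ((∑ x, w x : ℕ) : ℕ∞) ≤ coverPebblingNumber G := by
  classical
  refine le_sInf ?_
  rintro _ ⟨m, hm, rfl⟩
  obtain ⟨c', hreach, hcover⟩ := hm (Pi.single r m : α → ℕ) (by simp)
  have hpotential := hreach.sum_mul_le hw
  rw [Nat.cast_le]
  calc ∑ x, w x ≤ ∑ x, c' x * w x :=
        sum_le_sum fun x _ => Nat.le_mul_of_pos_left _ (hcover x)
    _ ≤ ∑ x, (Pi.single r m : α → ℕ) x * w x := hpotential
    _ = m := by simp [Pi.single_apply, hr]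

def IsCoverPebblingBound (G : SimpleGraph α) (m : ℕ) : Prop :=
  ∀ c : α → ℕ, m ≤ ∑ x, c x → IsCoverSolvable G c

theorem IsCoverPebblingBound.coverPebblingNumber_le {m : ℕ} (h : IsCoverPebblingBound G m) :
    coverPebblingNumber G ≤ m :=
  sInf_le ⟨m, fun c hc => h c hc.ge, rfl⟩

theorem IsCoverPebblingBound.of_iso {β : Type*} [Fintype β] {H : SimpleGraph β} {m : ℕ}
    (φ : G ≃g H) (h : IsCoverPebblingBound G m) : IsCoverPebblingBound H m := fun c hc =>
  IsCoverSolvable.of_iso φ (h _ (hc.trans_eq (φ.toEquiv.sum_comp c).symm))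

end Bounds

section BoxProdBool

variable {α : Type*} [Fintype α] {G : SimpleGraph α}

theorem sum_prod_mk_eq_sum_ite (c : Bool × α → ℕ) (b : Bool) :
    ∑ x, c (b, x) = ∑ p, if p.1 = b then c p else 0 := by
  cases b <;> simp [Fintype.sum_prod_type]

theorem exists_pebblingMove_across (c : Bool × α → ℕ) {b : Bool} {x : α} (hx : 2 ≤ c (b, x)) :
    ∃ c', PebblingMove ((⊤ : SimpleGraph Bool) □ G) c c' ∧
      ∑ y, c' (b, y) + 2 = ∑ y, c (b, y) ∧ ∑ y, c' (!b, y) = ∑ y, c (!b, y) + 1 := by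
  classical
  have hne : (b, x) ≠ (!b, x) := by simp
  refine ⟨pebbleStep c (b, x) (!b, x),
    pebblingMove_iff.mpr ⟨_, _, by simp [boxProd_adj], hx, rfl⟩, ?_, ?_⟩
  · have := sum_pebbleStep_mul_add hne hx fun p => if p.1 = b then 1 else 0
    simpa [sum_prod_mk_eq_sum_ite] using this
  · have := sum_pebbleStep_mul_add hne hx fun p => if p.1 = !b then 1 else 0
    simpa [sum_prod_mk_eq_sum_ite] using this

theorem exists_pebblingReach_balanced {m : ℕ} (hm : Fintype.card α ≤ m) (t : ℕ) :
    ∀ (c : Bool × α → ℕ) (b : Bool), m + 2 * t ≤ ∑ x, c (b, x) → m ≤ ∑ x, c (!b, x) + t →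
      ∃ c', PebblingReach ((⊤ : SimpleGraph Bool) □ G) c c' ∧ ∀ b', m ≤ ∑ x, c' (b', x) := by
  have hboth : ∀ (c : Bool × α → ℕ) (b : Bool), m ≤ ∑ x, c (b, x) → m ≤ ∑ x, c (!b, x) →
      ∀ b', m ≤ ∑ x, c (b', x) := by
    intro c b h₁ h₂ b'
    cases b <;> cases b' <;> assumption
  induction t with
  | zero => exact fun c b h₁ h₂ => ⟨c, .refl, hboth c b (by omega) (by omega)⟩
  | succ t ih =>
    intro c b h₁ h₂
    by_cases hdone : m ≤ ∑ x, c (!b, x)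
    · exact ⟨c, .refl, hboth c b (by omega) hdone⟩
    -- the richer copy still holds more than `card α` pebbles, so one of its vertices holds two
    obtain ⟨x, -, hx⟩ := exists_lt_of_sum_lt (s := univ) (f := fun _ => 1)
      (g := fun x => c (b, x)) (by simp only [sum_const, card_univ, smul_eq_mul]; omega)
    obtain ⟨c', hmove, hsum₁, hsum₂⟩ := exists_pebblingMove_across (G := G) c hx
    obtain ⟨c'', hreach, hbal⟩ := ih c' b (by omega) (by omega)
    exact ⟨c'', .head hmove hreach, hbal⟩

theorem IsCoverPebblingBound.boxProd_top_bool {m : ℕ} (h : IsCoverPebblingBound G m)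
    (hm : Fintype.card α ≤ m) : IsCoverPebblingBound ((⊤ : SimpleGraph Bool) □ G) (3 * m) := by
  intro c hc
  rw [Fintype.sum_prod_type, Fintype.sum_bool] at hc
  obtain ⟨b, hb⟩ : ∃ b, ∑ x, c (!b, x) ≤ ∑ x, c (b, x) := by
    rcases le_total (∑ x, c (true, x)) (∑ x, c (false, x)) with hle | hle
    exacts [⟨false, hle⟩, ⟨true, hle⟩]
  have hsum : ∑ x, c (b, x) + ∑ x, c (!b, x) = ∑ x, c (true, x) + ∑ x, c (false, x) := by
    cases b <;> simp [add_comm]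
  obtain ⟨c₀, hreach₀, hbal⟩ :=
    exists_pebblingReach_balanced hm (m - ∑ x, c (!b, x)) c b (by omega) (by omega)
  obtain ⟨e₀, hreach_e₀, hcover₀⟩ := h _ (hbal false)
  obtain ⟨c₁, hreach₁, rfl, hout₁⟩ :=
    PebblingReach.map (c := c₀) (boxProdRight ⊤ G false) hreach_e₀
  have hc₁ : ∀ x, c₁ (true, x) = c₀ (true, x) := fun x => hout₁ _ (by simp)
  obtain ⟨e₁, hreach_e₁, hcover₁⟩ := h (fun x => c₁ (true, x)) (by simpa [hc₁] using hbal true)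
  obtain ⟨c₂, hreach₂, rfl, hout₂⟩ :=
    PebblingReach.map (c := c₁) (boxProdRight ⊤ G true) hreach_e₁
  refine ⟨c₂, hreach₀.trans (hreach₁.trans hreach₂), fun ⟨b', x⟩ => ?_⟩
  cases b'
  · rw [hout₂ _ (by simp)]
    exact hcover₀ x
  · exact hcover₁ x

end BoxProdBool

section Cube

theorem cubeGraph_adj {n : ℕ} {x y : Fin n → Bool} :
    (cubeGraph n).Adj x y ↔ hammingDist x y = 1 := by
  rw [cubeGraph, fromRel_adj]
  change x ≠ y ∧ (hammingDist x y = 1 ∨ hammingDist y x = 1) ↔ _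
  rw [hammingDist_comm y x, or_self, and_iff_right_iff_imp]
  rintro h rfl
  simp at h

theorem hammingDist_cons {β : Type*} [DecidableEq β] {n : ℕ} (a b : β) (x y : Fin n → β) :
    hammingDist (Fin.cons a x : Fin (n + 1) → β) (Fin.cons b y) =
      (if a = b then 0 else 1) + hammingDist x y := by
  simp only [hammingDist, card_filter, Fin.sum_univ_succ, Fin.cons_zero, Fin.cons_succ, ite_not]

def cubeGraphSuccIso (n : ℕ) : ((⊤ : SimpleGraph Bool) □ cubeGraph n) ≃g cubeGraph (n + 1) where
  toEquiv := Fin.consEquiv fun _ => Bool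
  map_rel_iff' {p q} := by
    change (cubeGraph (n + 1)).Adj (Fin.cons p.1 p.2) (Fin.cons q.1 q.2) ↔ _
    rw [cubeGraph_adj, hammingDist_cons, boxProd_adj, cubeGraph_adj]
    by_cases h : p.1 = q.1 <;> simp [h]

theorem isCoverPebblingBound_cubeGraph (n : ℕ) : IsCoverPebblingBound (cubeGraph n) (3 ^ n) := by
  induction n with
  | zero =>
    intro c hc
    refine ⟨c, .refl, fun v => ?_⟩
    rw [Fintype.sum_unique, pow_zero] at hc
    convert hc
  | succ n ih =>
    have hcard : Fintype.card (Fin n → Bool) ≤ 3 ^ n := by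
      simpa using Nat.pow_le_pow_left (by norm_num : 2 ≤ 3) n
    rw [pow_succ']
    exact (ih.boxProd_top_bool hcard).of_iso (cubeGraphSuccIso n)

theorem two_pow_hammingDist_le_of_adj {n : ℕ} {u v : Fin n → Bool} (z : Fin n → Bool)
    (h : (cubeGraph n).Adj u v) : 2 ^ hammingDist v z ≤ 2 * 2 ^ hammingDist u z := by
  have htriangle := hammingDist_triangle v u z
  rw [hammingDist_comm v u, cubeGraph_adj.mp h] at htriangle
  rw [← pow_succ']
  exact Nat.pow_le_pow_right (by norm_num) (by omega)

theorem sum_two_pow_hammingDist_false (n : ℕ) :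
    ∑ v : Fin n → Bool, 2 ^ hammingDist v (fun _ => false) = 3 ^ n := by
  have hweight : ∀ v : Fin n → Bool,
      2 ^ hammingDist v (fun _ => false) = ∏ i, if v i then 2 else 1 := by
    intro v
    simp [hammingDist, ← prod_const, prod_filter]
  simp only [hweight]
  simpa using (Fintype.sum_pow (fun b : Bool => if b then 2 else 1) n).symm

end Cube

/-- The cover pebbling number of the `d`-dimensional hypercube is `3^d`. -/
theorem coverPebblingNumber_cubeGraph (d : ℕ) :
    coverPebblingNumber (cubeGraph d) = ((3 ^ d : ℕ) : ℕ∞) := by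
  refine le_antisymm (isCoverPebblingBound_cubeGraph d).coverPebblingNumber_le ?_
  rw [← sum_two_pow_hammingDist_false]
  exact sum_le_coverPebblingNumber (fun u v => two_pow_hammingDist_le_of_adj _)
    (r := fun _ => false) (by simp)
end

section
/- For n ≥ 2, the pebbling number of the book graph B_n = K_{1,n} □ P_2 is 2n + 4. -/
open SimpleGraph

variable {V : Type*}

variable [Fintype V]

/-- The book graph `B n = K_{1,n} □ P₂`. -/
def bookGraph (n : ℕ) : SimpleGraph ((Fin 1 ⊕ Fin n) × Fin 2) :=
  (completeBipartiteGraph (Fin 1) (Fin n)).boxProd (pathGraph 2)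

section PebblingAux
open Finset

variable [DecidableEq V] {G : SimpleGraph V} {c : V → ℕ}

lemma move_step {u v : V} (h : G.Adj u v) (hc : 2 ≤ c u) :
    PebblingMove G c (fun w => if w = u then c u - 2 else if w = v then c v + 1 else c w) := by
  refine ⟨u, v, h, hc, ?_, ?_, ?_⟩
  · simp
  · simp [h.ne']
  · intro w hw1 hw2; simp [hw1, hw2]

lemma moveMany {u v : V} (h : G.Adj u v) (k : ℕ) (hc : 2 * k ≤ c u) :
    ∃ c', PebblingReach G c c' ∧ c' u = c u - 2 * k ∧ c' v = c v + k ∧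
      ∀ w, w ≠ u → w ≠ v → c' w = c w := by
  induction k generalizing c with
  | zero => exact ⟨c, Relation.ReflTransGen.refl, by simp, by simp, fun _ _ _ => rfl⟩
  | succ k ih =>
    have hc2 : 2 ≤ c u := by omega
    set c1 : V → ℕ := fun w => if w = u then c u - 2 else if w = v then c v + 1 else c w with hc1
    obtain ⟨c', hr, h1, h2, h3⟩ := ih (c := c1) (by simp [hc1]; omega)
    refine ⟨c', Relation.ReflTransGen.head (move_step h hc2) hr, ?_, ?_, ?_⟩
    · rw [h1]; simp [hc1]; omega
    · rw [h2]; simp [hc1, h.ne']; omega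
    · intro w hw1 hw2; rw [h3 w hw1 hw2]; simp [hc1, hw1, hw2]

lemma reach_trans {c1 c2 c3 : V → ℕ} (h1 : PebblingReach G c1 c2)
    (h2 : PebblingReach G c2 c3) : PebblingReach G c1 c3 :=
  Relation.ReflTransGen.trans h1 h2

lemma collect {ι : Type*} [DecidableEq ι] (S : Finset ι) (f : ι → V) (h : V)
    (hinj : ∀ i ∈ S, ∀ j ∈ S, f i = f j → i = j)
    (hadj : ∀ i ∈ S, G.Adj (f i) h) :
    ∃ c', PebblingReach G c c' ∧ c' h = c h + ∑ i ∈ S, c (f i) / 2 ∧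
      ∀ w, w ≠ h → (∀ i ∈ S, w ≠ f i) → c' w = c w := by
  induction S using Finset.induction generalizing c with
  | empty => exact ⟨c, Relation.ReflTransGen.refl, by simp, fun _ _ _ => rfl⟩
  | @insert s S hs ih =>
    have hadjs : G.Adj (f s) h := hadj s (Finset.mem_insert_self s S)
    obtain ⟨c1, hr1, h1u, h1v, h1w⟩ := moveMany (c := c) hadjs (c (f s) / 2) (by omega)
    obtain ⟨c', hr2, h2, h3⟩ := ih (c := c1)
      (fun i hi j hj => hinj i (Finset.mem_insert_of_mem hi) j (Finset.mem_insert_of_mem hj))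
      (fun i hi => hadj i (Finset.mem_insert_of_mem hi))
    have hdiff : ∀ i ∈ S, c1 (f i) = c (f i) := by
      intro i hi
      refine h1w (f i) (fun he => hs ?_) (fun he => (hadj i (Finset.mem_insert_of_mem hi)).ne he)
      · rwa [hinj s (Finset.mem_insert_self s S) i (Finset.mem_insert_of_mem hi) he.symm]
    refine ⟨c', reach_trans hr1 hr2, ?_, ?_⟩
    · rw [h2, Finset.sum_insert hs, h1v]
      have hsum : ∑ i ∈ S, c1 (f i) / 2 = ∑ i ∈ S, c (f i) / 2 :=
        Finset.sum_congr rfl (fun i hi => by rw [hdiff i hi])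
      rw [hsum]; ring
    · intro w hw1 hw2
      rw [h3 w hw1 (fun i hi => hw2 i (Finset.mem_insert_of_mem hi)), h1w w
        (hw2 s (Finset.mem_insert_self s S)) hw1]

lemma solvable_refl {r : V} (h : 1 ≤ c r) : PebblingSolvable G c r 1 :=
  ⟨c, Relation.ReflTransGen.refl, h⟩

lemma solvable_of_reach_two {r w : V} (hadj : G.Adj w r) {c1 : V → ℕ}
    (hreach : PebblingReach G c c1) (h2 : 2 ≤ c1 w) : PebblingSolvable G c r 1 := by
  obtain ⟨c2, hr2, -, hv, -⟩ := moveMany (c := c1) hadj 1 (by omega)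
  exact ⟨c2, reach_trans hreach hr2, by omega⟩

lemma solvable_of_two {r w : V} (hadj : G.Adj w r) (h2 : 2 ≤ c w) : PebblingSolvable G c r 1 :=
  solvable_of_reach_two hadj Relation.ReflTransGen.refl h2



namespace BookAux

variable {n : ℕ}

abbrev hub (n : ℕ) (j : Fin 2) : (Fin 1 ⊕ Fin n) × Fin 2 := (Sum.inl 0, j)
abbrev leaf (i : Fin n) (j : Fin 2) : (Fin 1 ⊕ Fin n) × Fin 2 := (Sum.inr i, j)

lemma pg2_adj {j j' : Fin 2} (h : j ≠ j') : (pathGraph 2).Adj j j' := by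
  rw [pathGraph_adj]
  have := j.isLt; have := j'.isLt
  have : j.val ≠ j'.val := fun he => h (Fin.ext he)
  omega

lemma adj_hub_hub {j j' : Fin 2} (h : j ≠ j') : (bookGraph n).Adj (hub n j) (hub n j') := by
  exact SimpleGraph.boxProd_adj.mpr (Or.inr ⟨pg2_adj h, rfl⟩)

lemma adj_hub_leaf (i : Fin n) (j : Fin 2) : (bookGraph n).Adj (hub n j) (leaf i j) :=
  SimpleGraph.boxProd_adj.mpr (Or.inl ⟨by simp [hub, leaf], rfl⟩)

lemma adj_leaf_hub (i : Fin n) (j : Fin 2) : (bookGraph n).Adj (leaf i j) (hub n j) :=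
  (adj_hub_leaf i j).symm

lemma adj_leaf_leaf (i : Fin n) {j j' : Fin 2} (h : j ≠ j') :
    (bookGraph n).Adj (leaf i j) (leaf i j') :=
  SimpleGraph.boxProd_adj.mpr (Or.inr ⟨pg2_adj h, rfl⟩)

lemma hub_ne_leaf (j j' : Fin 2) (i : Fin n) : hub n j ≠ leaf i j' := by
  simp [hub, leaf]

lemma leaf_ne_leaf_iff {i i' : Fin n} {j j' : Fin 2} :
    leaf i j = leaf i' j' ↔ i = i' ∧ j = j' := by
  simp [leaf]

lemma sum_fin2 {M : Type*} [AddCommMonoid M] {j j' : Fin 2} (h : j ≠ j') (g : Fin 2 → M) :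
    ∑ x, g x = g j + g j' := by
  fin_cases j <;> fin_cases j' <;> simp_all [Fin.sum_univ_two] <;> exact (add_comm _ _)

lemma sum_decomp {j j' : Fin 2} (h : j ≠ j') (c : (Fin 1 ⊕ Fin n) × Fin 2 → ℕ) :
    ∑ v, c v = c (hub n j) + c (hub n j') +
      ∑ i : Fin n, (c (leaf i j) + c (leaf i j')) := by
  rw [Fintype.sum_prod_type_right]
  rw [sum_fin2 h]
  have hj : ∀ j0 : Fin 2, ∑ s : Fin 1 ⊕ Fin n, c (s, j0)
      = c (hub n j0) + ∑ i : Fin n, c (leaf i j0) := by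
    intro j0
    rw [Fintype.sum_sum_type]
    simp [hub, leaf]
  rw [hj j, hj j', Finset.sum_add_distrib]
  ring

/-- Per-page potential for a non-target page. -/
def Vp (x y : ℕ) : ℕ := 2 * x + 2 * (y / 2) - (if x % 2 = 1 ∧ y ≤ 1 then 2 else 0)

/-- Per-page potential, page `0` is the target page. -/
def W (i : Fin n) (x y : ℕ) : ℕ := if i.val = 0 then 8 * x + 4 * y else Vp x y

lemma W_mono (i : Fin n) {x y x' y' : ℕ} (hx : x ≤ x') (hy : y ≤ y') :
    W i x y ≤ W i x' y' := by
  unfold W Vp; split_ifs <;> omega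

lemma W_h_to_u (i : Fin n) (x y : ℕ) : W i (x + 1) y ≤ W i x y + 8 := by
  unfold W Vp; split_ifs <;> omega

lemma W_u_to_h (i : Fin n) {x : ℕ} (y : ℕ) (h : 2 ≤ x) : W i (x - 2) y + 4 ≤ W i x y := by
  unfold W Vp; split_ifs <;> omega

lemma W_H_to_v (i : Fin n) (x y : ℕ) : W i x (y + 1) ≤ W i x y + 4 := by
  unfold W Vp; split_ifs <;> omega

lemma W_v_to_H (i : Fin n) (x : ℕ) {y : ℕ} (h : 2 ≤ y) : W i x (y - 2) + 2 ≤ W i x y := by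
  unfold W Vp; split_ifs <;> omega

lemma W_v_to_u (i : Fin n) (x : ℕ) {y : ℕ} (h : 2 ≤ y) : W i (x + 1) (y - 2) ≤ W i x y := by
  unfold W Vp; split_ifs <;> omega

lemma W_u_to_v (i : Fin n) {x : ℕ} (y : ℕ) (h : 2 ≤ x) : W i (x - 2) (y + 1) ≤ W i x y := by
  unfold W Vp; split_ifs <;> omega

/-- Global potential for the lower-bound certificate (target `leaf 0 0`). -/
def Psi (c : (Fin 1 ⊕ Fin n) × Fin 2 → ℕ) : ℕ :=
  4 * c (hub n 0) + 2 * c (hub n 1) + ∑ i : Fin n, W i (c (leaf i 0)) (c (leaf i 1))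

lemma Psi_mono {c c' : (Fin 1 ⊕ Fin n) × Fin 2 → ℕ} (h : ∀ v, c v ≤ c' v) :
    Psi c ≤ Psi c' := by
  unfold Psi
  have := Finset.sum_le_sum (fun i (_ : i ∈ Finset.univ) => W_mono i (h (leaf i 0)) (h (leaf i 1)))
  have h1 := h (hub n 0); have h2 := h (hub n 1)
  omega

lemma Psi_ge (c : (Fin 1 ⊕ Fin n) × Fin 2 → ℕ) (hn : 0 < n) :
    8 * c (leaf (⟨0, hn⟩ : Fin n) 0) ≤ Psi c := by
  unfold Psi
  have h0 : W ⟨0, hn⟩ (c (leaf ⟨0, hn⟩ 0)) (c (leaf ⟨0, hn⟩ 1)) ≤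
      ∑ i : Fin n, W i (c (leaf i 0)) (c (leaf i 1)) :=
    Finset.single_le_sum (f := fun i => W i (c (leaf i 0)) (c (leaf i 1)))
      (fun i _ => Nat.zero_le _) (Finset.mem_univ _)
  have h1 : 8 * c (leaf ⟨0, hn⟩ 0) ≤ W ⟨0, hn⟩ (c (leaf ⟨0, hn⟩ 0)) (c (leaf ⟨0, hn⟩ 1)) := by
    simp only [W]; norm_num
  omega

lemma sum_W_le {c c' : (Fin 1 ⊕ Fin n) × Fin 2 → ℕ} (p : Fin n) (d e : ℕ)
    (hother : ∀ i : Fin n, i ≠ p → c' (leaf i 0) = c (leaf i 0) ∧ c' (leaf i 1) = c (leaf i 1))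
    (hp : W p (c' (leaf p 0)) (c' (leaf p 1)) + e ≤ W p (c (leaf p 0)) (c (leaf p 1)) + d) :
    (∑ i : Fin n, W i (c' (leaf i 0)) (c' (leaf i 1))) + e ≤
      (∑ i : Fin n, W i (c (leaf i 0)) (c (leaf i 1))) + d := by
  rw [← Finset.add_sum_erase _ _ (Finset.mem_univ p),
      ← Finset.add_sum_erase _ (fun i => W i (c (leaf i 0)) (c (leaf i 1))) (Finset.mem_univ p)]
  have he : ∑ i ∈ Finset.univ.erase p, W i (c' (leaf i 0)) (c' (leaf i 1)) =
      ∑ i ∈ Finset.univ.erase p, W i (c (leaf i 0)) (c (leaf i 1)) := by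
    refine Finset.sum_congr rfl (fun i hi => ?_)
    obtain ⟨e1, e2⟩ := hother i (Finset.ne_of_mem_erase hi)
    rw [e1, e2]
  omega

lemma fin2_cases (j : Fin 2) : j = 0 ∨ j = 1 := by omega

lemma Psi_move {c c' : (Fin 1 ⊕ Fin n) × Fin 2 → ℕ}
    (h : PebblingMove (bookGraph n) c c') : Psi c' ≤ Psi c := by
  obtain ⟨⟨us, uj⟩, ⟨vs, vj⟩, hadj, hcu, h1, h2, h3⟩ := h
  rcases SimpleGraph.boxProd_adj.mp hadj with ⟨hbip, hj⟩ | ⟨hpg, hs⟩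
  · simp only at hj
    subst hj
    cases us with
    | inl a =>
      obtain rfl : a = 0 := Subsingleton.elim a 0
      cases vs with
      | inl b => simp at hbip
      | inr i =>
        -- hub uj → leaf i uj
        have hother : ∀ i' : Fin n, i' ≠ i →
            c' (leaf i' 0) = c (leaf i' 0) ∧ c' (leaf i' 1) = c (leaf i' 1) := by
          intro i' hi'
          constructor <;> exact h3 _ (by simp [leaf, hub]) (by simp [leaf, hi'])
        rcases fin2_cases uj with rfl | rfl
        · have hh1 : c' (Sum.inl 0, (1:Fin 2)) = c (Sum.inl 0, (1:Fin 2)) :=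
            h3 _ (by simp) (by simp)
          have hv1 : c' (Sum.inr i, (1:Fin 2)) = c (Sum.inr i, (1:Fin 2)) :=
            h3 _ (by simp) (by simp)
          have hsum := sum_W_le (c := c) (c' := c') i 8 0 hother
            (by simp only [leaf]; rw [hv1, h2]
                have := W_h_to_u i (c (Sum.inr i, 0)) (c (Sum.inr i, 1)); omega)
          simp only [Psi, hub, leaf] at hsum ⊢
          omega
        · have hh0 : c' (Sum.inl 0, (0:Fin 2)) = c (Sum.inl 0, (0:Fin 2)) :=
            h3 _ (by simp) (by simp)
          have hv0 : c' (Sum.inr i, (0:Fin 2)) = c (Sum.inr i, (0:Fin 2)) :=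
            h3 _ (by simp) (by simp)
          have hsum := sum_W_le (c := c) (c' := c') i 4 0 hother
            (by simp only [leaf]; rw [hv0, h2]
                have := W_H_to_v i (c (Sum.inr i, 0)) (c (Sum.inr i, 1)); omega)
          simp only [Psi, hub, leaf] at hsum ⊢
          omega
    | inr i =>
      cases vs with
      | inr b => simp at hbip
      | inl a =>
        obtain rfl : a = 0 := Subsingleton.elim a 0
        -- leaf i uj → hub uj
        have hother : ∀ i' : Fin n, i' ≠ i →
            c' (leaf i' 0) = c (leaf i' 0) ∧ c' (leaf i' 1) = c (leaf i' 1) := by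
          intro i' hi'
          constructor <;> exact h3 _ (by simp [leaf, hi']) (by simp [leaf, hub])
        rcases fin2_cases uj with rfl | rfl
        · have hh1 : c' (Sum.inl 0, (1:Fin 2)) = c (Sum.inl 0, (1:Fin 2)) :=
            h3 _ (by simp) (by simp)
          have hv1 : c' (Sum.inr i, (1:Fin 2)) = c (Sum.inr i, (1:Fin 2)) :=
            h3 _ (by simp) (by simp)
          have hsum := sum_W_le (c := c) (c' := c') i 0 4 hother
            (by simp only [leaf]; rw [hv1, h1]
                have := W_u_to_h i (y := c (Sum.inr i, 1)) hcu; omega)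
          simp only [Psi, hub, leaf] at hsum ⊢
          omega
        · have hh0 : c' (Sum.inl 0, (0:Fin 2)) = c (Sum.inl 0, (0:Fin 2)) :=
            h3 _ (by simp) (by simp)
          have hv0 : c' (Sum.inr i, (0:Fin 2)) = c (Sum.inr i, (0:Fin 2)) :=
            h3 _ (by simp) (by simp)
          have hsum := sum_W_le (c := c) (c' := c') i 0 2 hother
            (by simp only [leaf]; rw [hv0, h1]
                have := W_v_to_H i (c (Sum.inr i, 0)) (y := c (Sum.inr i, 1)) hcu; omega)
          simp only [Psi, hub, leaf] at hsum ⊢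
          omega
  · simp only at hs
    subst hs
    have hne : uj ≠ vj := hpg.ne
    cases us with
    | inl a =>
      obtain rfl : a = 0 := Subsingleton.elim a 0
      have hsum : ∑ i : Fin n, W i (c' (leaf i 0)) (c' (leaf i 1)) =
          ∑ i : Fin n, W i (c (leaf i 0)) (c (leaf i 1)) := by
        refine Finset.sum_congr rfl (fun i _ => ?_)
        rw [h3 _ (by simp [leaf, hub]) (by simp [leaf, hub]),
            h3 _ (by simp [leaf, hub]) (by simp [leaf, hub])]
      rcases fin2_cases uj with rfl | rfl <;> rcases fin2_cases vj with rfl | rfl <;>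
          [skip; skip; skip; skip] <;>
        first
          | exact absurd rfl hne
          | (simp only [Psi, hub, leaf] at hsum ⊢; rw [hsum]; omega)
    | inr i =>
      have hother : ∀ i' : Fin n, i' ≠ i →
          c' (leaf i' 0) = c (leaf i' 0) ∧ c' (leaf i' 1) = c (leaf i' 1) := by
        intro i' hi'
        constructor <;> exact h3 _ (by simp [leaf, hi']) (by simp [leaf, hi'])
      have hh0 : c' (Sum.inl 0, (0:Fin 2)) = c (Sum.inl 0, (0:Fin 2)) :=
        h3 _ (by simp) (by simp)
      have hh1 : c' (Sum.inl 0, (1:Fin 2)) = c (Sum.inl 0, (1:Fin 2)) :=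
        h3 _ (by simp) (by simp)
      rcases fin2_cases uj with rfl | rfl <;> rcases fin2_cases vj with rfl | rfl
      · exact absurd rfl hne
      · have hsum := sum_W_le (c := c) (c' := c') i 0 0 hother
          (by simp only [leaf]; rw [h1, h2]
              have := W_u_to_v i (c (Sum.inr i, 1)) (x := c (Sum.inr i, 0)) hcu; omega)
        simp only [Psi, hub, leaf] at hsum ⊢
        omega
      · have hsum := sum_W_le (c := c) (c' := c') i 0 0 hother
          (by simp only [leaf]; rw [h1, h2]
              have := W_v_to_u i (c (Sum.inr i, 0)) (y := c (Sum.inr i, 1)) hcu; omega)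
        simp only [Psi, hub, leaf] at hsum ⊢
        omega
      · exact absurd rfl hne

lemma Psi_reach {c c' : (Fin 1 ⊕ Fin n) × Fin 2 → ℕ}
    (h : PebblingReach (bookGraph n) c c') : Psi c' ≤ Psi c := by
  induction h with
  | refl => exact le_rfl
  | tail _ hstep ih => exact le_trans (Psi_move hstep) ih

def c0 (n : ℕ) : (Fin 1 ⊕ Fin n) × Fin 2 → ℕ :=
  fun p => match p with
  | (Sum.inl _, _) => 0
  | (Sum.inr i, j) => if i.val = 1 then (if j = 1 then 7 else 0)
      else if i.val = 0 then 0 else 1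

lemma sum_c0 (hn : 2 ≤ n) : ∑ v, c0 n v = 2 * n + 3 := by
  have h01 : (0 : Fin 2) ≠ 1 := by omega
  rw [sum_decomp h01]
  have i0 : Fin n := ⟨0, by omega⟩
  set g : Fin n → ℕ := fun i => c0 n (leaf i 0) + c0 n (leaf i 1) with hg
  have hgv : ∀ i : Fin n, g i = if i.val = 1 then 7 else if i.val = 0 then 0 else 2 := by
    intro i
    simp only [hg, c0, leaf]
    split_ifs <;> omega
  have h0 : c0 n (hub n 0) = 0 := rfl
  have h1 : c0 n (hub n 1) = 0 := rfl
  rw [h0, h1]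
  have hi0 : (⟨0, by omega⟩ : Fin n) ∈ Finset.univ := Finset.mem_univ _
  have hi1 : (⟨1, by omega⟩ : Fin n) ∈ (Finset.univ.erase (⟨0, by omega⟩ : Fin n)) := by
    refine Finset.mem_erase.mpr ⟨?_, Finset.mem_univ _⟩
    intro he
    have := congrArg Fin.val he
    simp at this
  rw [← Finset.add_sum_erase _ g hi0, ← Finset.add_sum_erase _ g hi1]
  have hrest : ∑ i ∈ (Finset.univ.erase (⟨0, by omega⟩ : Fin n)).erase ⟨1, by omega⟩, g i
      = 2 * (n - 2) := by
    rw [Finset.sum_congr rfl (g := fun _ => 2) (fun i hi => ?_), Finset.sum_const,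
      smul_eq_mul]
    · rw [Finset.card_erase_of_mem hi1, Finset.card_erase_of_mem hi0, Finset.card_univ,
        Fintype.card_fin]
      omega
    · have h1 : i ≠ ⟨1, by omega⟩ := Finset.ne_of_mem_erase hi
      have h0 : i ≠ ⟨0, by omega⟩ := Finset.ne_of_mem_erase (Finset.mem_of_mem_erase hi)
      rw [hgv]
      have hv1 : i.val ≠ 1 := fun hv => h1 (Fin.ext hv)
      have hv0 : i.val ≠ 0 := fun hv => h0 (Fin.ext hv)
      simp [hv0, hv1]
  rw [hrest, hgv, hgv]
  norm_num
  omega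

lemma Psi_c0 (hn : 2 ≤ n) : Psi (c0 n) = 6 := by
  unfold Psi
  have h0 : c0 n (hub n 0) = 0 := rfl
  have h1 : c0 n (hub n 1) = 0 := rfl
  rw [h0, h1]
  set g : Fin n → ℕ := fun i => W i (c0 n (leaf i 0)) (c0 n (leaf i 1)) with hg
  have hi0 : (⟨0, by omega⟩ : Fin n) ∈ Finset.univ := Finset.mem_univ _
  have hi1 : (⟨1, by omega⟩ : Fin n) ∈ (Finset.univ.erase (⟨0, by omega⟩ : Fin n)) := by
    refine Finset.mem_erase.mpr ⟨?_, Finset.mem_univ _⟩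
    intro he
    have := congrArg Fin.val he
    simp at this
  rw [← Finset.add_sum_erase _ g hi0, ← Finset.add_sum_erase _ g hi1]
  have hg0 : g ⟨0, by omega⟩ = 0 := by simp [hg, W, c0, leaf]
  have hg1 : g ⟨1, by omega⟩ = 6 := by
    simp only [hg, W, c0, leaf]
    norm_num [Vp]
  have hrest : ∑ i ∈ (Finset.univ.erase (⟨0, by omega⟩ : Fin n)).erase ⟨1, by omega⟩, g i
      = 0 := by
    refine Finset.sum_eq_zero (fun i hi => ?_)
    have h1 : i ≠ ⟨1, by omega⟩ := Finset.ne_of_mem_erase hi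
    have h0 : i ≠ ⟨0, by omega⟩ := Finset.ne_of_mem_erase (Finset.mem_of_mem_erase hi)
    have hv1 : i.val ≠ 1 := fun hv => h1 (Fin.ext hv)
    have hv0 : i.val ≠ 0 := fun hv => h0 (Fin.ext hv)
    simp only [hg, W, c0, leaf, if_neg hv0, if_neg hv1]
    norm_num [Vp]
  rw [hg0, hg1, hrest]
  norm_num

end BookAux

lemma exists_sub_config {V : Type*} [Fintype V] [DecidableEq V] (k : ℕ) :
    ∀ (c : V → ℕ) (m : ℕ), ∑ v, c v = m + k →
      ∃ c' : V → ℕ, (∀ v, c' v ≤ c v) ∧ ∑ v, c' v = m := by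
  induction k with
  | zero =>
    intro c m h
    exact ⟨c, fun _ => le_rfl, by omega⟩
  | succ k ih =>
    intro c m h
    have hpos : ∑ v, c v ≠ 0 := by omega
    obtain ⟨v0, -, hv0⟩ := Finset.exists_ne_zero_of_sum_ne_zero hpos
    set c1 := Function.update c v0 (c v0 - 1) with hc1
    have hsum : ∑ v, c1 v = m + k := by
      rw [hc1, Finset.sum_update_of_mem (Finset.mem_univ v0), ← Finset.erase_eq]
      rw [← Finset.add_sum_erase _ c (Finset.mem_univ v0)] at h
      omega
    obtain ⟨c', hle, hs⟩ := ih c1 m hsum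
    refine ⟨c', fun v => le_trans (hle v) ?_, hs⟩
    rw [hc1]
    rcases eq_or_ne v v0 with rfl | hv
    · simp
    · simp [Function.update_of_ne hv]

namespace BookAux

section Plans

variable {n : ℕ} {c : (Fin 1 ⊕ Fin n) × Fin 2 → ℕ} {j j' : Fin 2} {t : Fin n}

lemma hub_ne_hub {j j' : Fin 2} (h : j ≠ j') : hub n j ≠ hub n j' :=
  fun he => h (congrArg Prod.snd he)

lemma leaf_ne (i i' : Fin n) {j j' : Fin 2} (h : i ≠ i' ∨ j ≠ j') : leaf i j ≠ leaf i' j' := by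
  intro he
  rw [leaf_ne_leaf_iff] at he
  tauto

lemma linj (jj : Fin 2) : ∀ i ∈ Finset.univ.erase t, ∀ i' ∈ Finset.univ.erase t,
    leaf i jj = leaf i' jj → (i : Fin n) = i' := by
  intro i _ i' _ h
  exact ((leaf_ne_leaf_iff).mp h).1

lemma sum_le_card_add {ι : Type*} (S : Finset ι) (f : ι → ℕ) :
    ∑ i ∈ S, f i ≤ S.card + 2 * ∑ i ∈ S, f i / 2 := by
  calc ∑ i ∈ S, f i ≤ ∑ i ∈ S, (1 + 2 * (f i / 2)) :=
        Finset.sum_le_sum (fun i _ => by omega)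
    _ = S.card + 2 * ∑ i ∈ S, f i / 2 := by
        rw [Finset.sum_add_distrib, Finset.sum_const, smul_eq_mul, mul_one, Finset.mul_sum]

/-- Plan A : collect pebbles on the target-side hub. -/
lemma planA (hjj : j ≠ j')
    (hP : 2 ≤ c (hub n j) + ∑ i ∈ Finset.univ.erase t, c (leaf i j) / 2) :
    PebblingSolvable (bookGraph n) c (leaf t j) 1 := by
  obtain ⟨c1, hr1, hh, -⟩ := collect (G := bookGraph n) (c := c)
    (Finset.univ.erase t) (fun i => leaf i j) (hub n j) (linj j)
    (fun i _ => adj_leaf_hub i j)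
  exact solvable_of_reach_two (adj_hub_leaf t j) hr1 (by omega)

/-- Plan B : one pebble opposite the target plus two collectable on the far hub. -/
lemma planB (hjj : j ≠ j') (hb : 1 ≤ c (leaf t j'))
    (hQ : 2 ≤ c (hub n j') + ∑ i ∈ Finset.univ.erase t, c (leaf i j') / 2) :
    PebblingSolvable (bookGraph n) c (leaf t j) 1 := by
  obtain ⟨c1, hr1, hh, hw⟩ := collect (G := bookGraph n) (c := c)
    (Finset.univ.erase t) (fun i => leaf i j') (hub n j') (linj j')
    (fun i _ => adj_leaf_hub i j')
  have hb1 : c1 (leaf t j') = c (leaf t j') := by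
    refine hw _ ((hub_ne_leaf j' j' t).symm) (fun i hi => ?_)
    exact leaf_ne t i (Or.inl (Finset.ne_of_mem_erase hi).symm)
  obtain ⟨c2, hr2, -, hv2, hw2⟩ := moveMany (c := c1) (adj_hub_leaf t j') 1 (by omega)
  refine solvable_of_reach_two (adj_leaf_leaf t (show j' ≠ j from Ne.symm hjj))
    (reach_trans hr1 hr2) ?_
  omega

/-- Plan C : four collectable on the far hub. -/
lemma planC (hjj : j ≠ j')
    (hQ : 4 ≤ c (hub n j') + ∑ i ∈ Finset.univ.erase t, c (leaf i j') / 2) :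
    PebblingSolvable (bookGraph n) c (leaf t j) 1 := by
  obtain ⟨c1, hr1, hh, hw⟩ := collect (G := bookGraph n) (c := c)
    (Finset.univ.erase t) (fun i => leaf i j') (hub n j') (linj j')
    (fun i _ => adj_leaf_hub i j')
  obtain ⟨c2, hr2, -, hv2, hw2⟩ := moveMany (c := c1) (adj_hub_leaf t j') 2 (by omega)
  refine solvable_of_reach_two (adj_leaf_leaf t (show j' ≠ j from Ne.symm hjj))
    (reach_trans hr1 hr2) ?_
  omega

/-- Plan D : two collectable on the far hub and one more collectable on the near hub. -/
lemma planD (hjj : j ≠ j')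
    (hQ : 2 ≤ c (hub n j') + ∑ i ∈ Finset.univ.erase t, c (leaf i j') / 2)
    (hP : 1 ≤ c (hub n j) + ∑ i ∈ Finset.univ.erase t, c (leaf i j) / 2) :
    PebblingSolvable (bookGraph n) c (leaf t j) 1 := by
  obtain ⟨c1, hr1, hh, hw⟩ := collect (G := bookGraph n) (c := c)
    (Finset.univ.erase t) (fun i => leaf i j') (hub n j') (linj j')
    (fun i _ => adj_leaf_hub i j')
  obtain ⟨c2, hr2, -, hv2, hw2⟩ := moveMany (c := c1) (adj_hub_hub (n := n)
    (Ne.symm hjj)) 1 (by omega)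
  have hc1h : c1 (hub n j) = c (hub n j) := by
    refine hw _ (hub_ne_hub hjj) (fun i hi => hub_ne_leaf j j' i)
  have hc2h : c2 (hub n j) = c (hub n j) + 1 := by omega
  have hx2 : ∀ i ∈ Finset.univ.erase t, c2 (leaf i j) = c (leaf i j) := by
    intro i hi
    rw [hw2 _ ((hub_ne_leaf j' j i).symm) ((hub_ne_leaf j j i).symm),
        hw _ ((hub_ne_leaf j' j i).symm) (fun i' _ => leaf_ne i i' (Or.inr hjj))]
  obtain ⟨c3, hr3, hh3, -⟩ := collect (G := bookGraph n) (c := c2)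
    (Finset.univ.erase t) (fun i => leaf i j) (hub n j) (linj j)
    (fun i _ => adj_leaf_hub i j)
  have hsum3 : ∑ i ∈ Finset.univ.erase t, c2 (leaf i j) / 2
      = ∑ i ∈ Finset.univ.erase t, c (leaf i j) / 2 :=
    Finset.sum_congr rfl (fun i hi => by rw [hx2 i hi])
  refine solvable_of_reach_two (adj_hub_leaf t j) (reach_trans (reach_trans hr1 hr2) hr3) ?_
  omega

/-- Plan E1 : a single page with one pebble near, six far. -/
lemma planE1 (hjj : j ≠ j') {k : Fin n} (hk : k ≠ t)
    (hx : 1 ≤ c (leaf k j)) (hy : 6 ≤ c (leaf k j')) :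
    PebblingSolvable (bookGraph n) c (leaf t j) 1 := by
  obtain ⟨c1, hr1, -, hv1, hw1⟩ := moveMany (c := c)
    (adj_leaf_leaf k (Ne.symm hjj)) 3 (by omega)
  obtain ⟨c2, hr2, -, hv2, -⟩ := moveMany (c := c1) (adj_leaf_hub k j) 2 (by omega)
  refine solvable_of_reach_two (adj_hub_leaf t j) (reach_trans hr1 hr2) ?_
  omega

/-- Plan E2 : two pages each with one pebble near, two far. -/
lemma planE2 (hjj : j ≠ j') {k m : Fin n} (hk : k ≠ t) (hm : m ≠ t) (hkm : k ≠ m)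
    (hxk : 1 ≤ c (leaf k j)) (hyk : 2 ≤ c (leaf k j'))
    (hxm : 1 ≤ c (leaf m j)) (hym : 2 ≤ c (leaf m j')) :
    PebblingSolvable (bookGraph n) c (leaf t j) 1 := by
  obtain ⟨c1, hr1, -, hv1, hw1⟩ := moveMany (c := c)
    (adj_leaf_leaf k (Ne.symm hjj)) 1 (by omega)
  obtain ⟨c2, hr2, -, hv2, hw2⟩ := moveMany (c := c1) (adj_leaf_hub k j) 1 (by omega)
  have hym2 : c2 (leaf m j') = c (leaf m j') := by
    rw [hw2 _ (leaf_ne m k (Or.inl hkm.symm)) ((hub_ne_leaf j j' m).symm),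
        hw1 _ (leaf_ne m k (Or.inl hkm.symm)) (leaf_ne m k (by tauto))]
  have hxm2 : c2 (leaf m j) = c (leaf m j) := by
    rw [hw2 _ (leaf_ne m k (by tauto)) ((hub_ne_leaf j j m).symm),
        hw1 _ (leaf_ne m k (by tauto)) (leaf_ne m k (Or.inl hkm.symm))]
  obtain ⟨c3, hr3, -, hv3, hw3⟩ := moveMany (c := c2)
    (adj_leaf_leaf m (Ne.symm hjj)) 1 (by omega)
  have hh3 : c3 (hub n j) = c2 (hub n j) := by
    rw [hw3 _ (hub_ne_leaf j j' m) (hub_ne_leaf j j m)]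
  obtain ⟨c4, hr4, -, hv4, -⟩ := moveMany (c := c3) (adj_leaf_hub m j) 1 (by omega)
  refine solvable_of_reach_two (adj_hub_leaf t j)
    (reach_trans (reach_trans (reach_trans hr1 hr2) hr3) hr4) ?_
  omega

lemma card_I (t : Fin n) : (Finset.univ.erase t).card = n - 1 := by
  rw [Finset.card_erase_of_mem (Finset.mem_univ t), Finset.card_univ, Fintype.card_fin]

lemma solvable_hub (hjj : j ≠ j') (hsum : ∑ v, c v = 2 * n + 4) :
    PebblingSolvable (bookGraph n) c (hub n j) 1 := by
  by_contra hns
  have h_h : c (hub n j) = 0 := by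
    by_contra h; exact hns (solvable_refl (by omega))
  have h_u : ∀ i, c (leaf i j) ≤ 1 := by
    intro i; by_contra h
    exact hns (solvable_of_two (adj_leaf_hub i j) (by omega))
  have h_H : c (hub n j') ≤ 1 := by
    by_contra h
    exact hns (solvable_of_two (adj_hub_hub (Ne.symm hjj)) (by omega))
  rw [sum_decomp hjj c] at hsum
  by_cases hex : ∃ k, 2 ≤ c (leaf k j')
  · obtain ⟨k, hk⟩ := hex
    have hH0 : c (hub n j') = 0 := by
      by_contra h
      obtain ⟨c1, hr1, -, hv1, -⟩ := moveMany (c := c) (adj_leaf_hub k j') 1 (by omega)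
      exact hns (solvable_of_reach_two (adj_hub_hub (Ne.symm hjj)) hr1 (by omega))
    have hx0 : c (leaf k j) = 0 := by
      by_contra h
      obtain ⟨c1, hr1, -, hv1, -⟩ := moveMany (c := c) (adj_leaf_leaf k (Ne.symm hjj)) 1
        (by omega)
      exact hns (solvable_of_reach_two (adj_leaf_hub k j) hr1 (by omega))
    have hy3 : c (leaf k j') ≤ 3 := by
      by_contra h
      obtain ⟨c1, hr1, -, hv1, -⟩ := moveMany (c := c) (adj_leaf_leaf k (Ne.symm hjj)) 2
        (by omega)
      exact hns (solvable_of_reach_two (adj_leaf_hub k j) hr1 (by omega))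
    have hothers : ∀ m, m ≠ k → c (leaf m j') ≤ 1 := by
      intro m hm
      by_contra h
      obtain ⟨c1, hr1, -, hv1, hw1⟩ := moveMany (c := c) (adj_leaf_hub k j') 1 (by omega)
      have hm1 : c1 (leaf m j') = c (leaf m j') :=
        hw1 _ (leaf_ne m k (Or.inl hm)) ((hub_ne_leaf j' j' m).symm)
      obtain ⟨c2, hr2, -, hv2, -⟩ := moveMany (c := c1) (adj_leaf_hub m j') 1 (by omega)
      exact hns (solvable_of_reach_two (adj_hub_hub (Ne.symm hjj))
        (reach_trans hr1 hr2) (by omega))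
    rw [← Finset.add_sum_erase _ _ (Finset.mem_univ k)] at hsum
    have hb : ∑ i ∈ Finset.univ.erase k, (c (leaf i j) + c (leaf i j')) ≤ 2 * (n - 1) := by
      calc ∑ i ∈ Finset.univ.erase k, (c (leaf i j) + c (leaf i j'))
          ≤ ∑ _i ∈ Finset.univ.erase k, 2 := Finset.sum_le_sum (fun i hi => by
            have := h_u i; have := hothers i (Finset.ne_of_mem_erase hi); omega)
        _ = 2 * (n - 1) := by
            rw [Finset.sum_const, smul_eq_mul, card_I]; ring
    omega
  · push_neg at hex
    have hb : ∑ i : Fin n, (c (leaf i j) + c (leaf i j')) ≤ 2 * n := by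
      calc ∑ i : Fin n, (c (leaf i j) + c (leaf i j'))
          ≤ ∑ _i : Fin n, 2 := Finset.sum_le_sum (fun i _ => by
            have := h_u i; have := hex i; omega)
        _ = 2 * n := by rw [Finset.sum_const, smul_eq_mul, Finset.card_univ,
              Fintype.card_fin]; ring
    omega

lemma solvable_leaf (hjj : j ≠ j') (t : Fin n) (hn : 2 ≤ n)
    (hsum : ∑ v, c v = 2 * n + 4) :
    PebblingSolvable (bookGraph n) c (leaf t j) 1 := by
  by_contra hns
  have h_a : c (leaf t j) = 0 := by
    by_contra h; exact hns (solvable_refl (by omega))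
  have h_b : c (leaf t j') ≤ 1 := by
    by_contra h
    exact hns (solvable_of_two (adj_leaf_leaf t (Ne.symm hjj)) (by omega))
  have hP : c (hub n j) + ∑ i ∈ Finset.univ.erase t, c (leaf i j) / 2 ≤ 1 := by
    by_contra h; exact hns (planA hjj (by omega))
  have hTx : ∑ i ∈ Finset.univ.erase t, c (leaf i j)
      ≤ (n - 1) + 2 * ∑ i ∈ Finset.univ.erase t, c (leaf i j) / 2 := by
    have h := sum_le_card_add (Finset.univ.erase t) (fun i => c (leaf i j))
    rwa [card_I] at h
  have hTy : ∑ i ∈ Finset.univ.erase t, c (leaf i j')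
      ≤ (n - 1) + 2 * ∑ i ∈ Finset.univ.erase t, c (leaf i j') / 2 := by
    have h := sum_le_card_add (Finset.univ.erase t) (fun i => c (leaf i j'))
    rwa [card_I] at h
  rw [sum_decomp hjj c, ← Finset.add_sum_erase _ _ (Finset.mem_univ t),
    Finset.sum_add_distrib] at hsum
  by_cases hcb : 1 ≤ c (leaf t j')
  · have hQ1 : c (hub n j') + ∑ i ∈ Finset.univ.erase t, c (leaf i j') / 2 ≤ 1 := by
      by_contra h; exact hns (planB hjj hcb (by omega))
    omega
  · have hQ3 : c (hub n j') + ∑ i ∈ Finset.univ.erase t, c (leaf i j') / 2 ≤ 3 := by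
      by_contra h; exact hns (planC hjj (by omega))
    by_cases hQ2 : 2 ≤ c (hub n j') + ∑ i ∈ Finset.univ.erase t, c (leaf i j') / 2
    · have hP0 : c (hub n j) + ∑ i ∈ Finset.univ.erase t, c (leaf i j) / 2 = 0 := by
        by_contra h; exact hns (planD hjj (by omega) (by omega))
      have hxle : ∀ i ∈ Finset.univ.erase t, c (leaf i j) ≤ 1 := by
        intro i hi
        have h1 : c (leaf i j) / 2 ≤ ∑ i ∈ Finset.univ.erase t, c (leaf i j) / 2 :=
          Finset.single_le_sum (f := fun i => c (leaf i j) / 2) (fun _ _ => Nat.zero_le _) hi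
        omega
      have hTx1 : ∑ i ∈ Finset.univ.erase t, c (leaf i j) ≤ n - 1 := by
        calc ∑ i ∈ Finset.univ.erase t, c (leaf i j) ≤ ∑ _i ∈ Finset.univ.erase t, 1 :=
              Finset.sum_le_sum (fun i hi => hxle i hi)
          _ = n - 1 := by rw [Finset.sum_const, smul_eq_mul, card_I]; ring
      by_cases hH : 1 ≤ c (hub n j')
      · omega
      · by_cases hSy2 : ∑ i ∈ Finset.univ.erase t, c (leaf i j') / 2 ≤ 2
        · omega
        · have hSy3 : ∑ i ∈ Finset.univ.erase t, c (leaf i j') / 2 = 3 := by omega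
          have hzero : ∃ z ∈ Finset.univ.erase t, c (leaf z j) = 0 := by
            by_cases h6 : ∃ k ∈ Finset.univ.erase t, 3 ≤ c (leaf k j') / 2
            · obtain ⟨k, hkI, hk⟩ := h6
              refine ⟨k, hkI, ?_⟩
              by_contra h
              exact hns (planE1 hjj (Finset.ne_of_mem_erase hkI) (by omega) (by omega))
            · push_neg at h6
              have hSyne : ∑ i ∈ Finset.univ.erase t, c (leaf i j') / 2 ≠ 0 := by omega
              obtain ⟨k, hkI, hk⟩ := Finset.exists_ne_zero_of_sum_ne_zero hSyne
              have hrest : ∑ i ∈ (Finset.univ.erase t).erase k, c (leaf i j') / 2 ≠ 0 := by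
                have h4 := Finset.add_sum_erase _ (fun i => c (leaf i j') / 2) hkI
                have h2 := h6 k hkI
                omega
              obtain ⟨m, hmI, hm⟩ := Finset.exists_ne_zero_of_sum_ne_zero hrest
              have hmk : m ≠ k := Finset.ne_of_mem_erase hmI
              have hmI' : m ∈ Finset.univ.erase t := Finset.mem_of_mem_erase hmI
              by_cases hxk : c (leaf k j) = 0
              · exact ⟨k, hkI, hxk⟩
              · by_cases hxm : c (leaf m j) = 0
                · exact ⟨m, hmI', hxm⟩
                · exact absurd (planE2 hjj (Finset.ne_of_mem_erase hkI)
                    (Finset.ne_of_mem_erase hmI') hmk.symm (by omega) (by omega)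
                    (by omega) (by omega)) hns
          obtain ⟨z, hzI, hz⟩ := hzero
          have hTx2 : ∑ i ∈ Finset.univ.erase t, c (leaf i j) ≤ n - 2 := by
            rw [← Finset.add_sum_erase _ _ hzI, hz, zero_add]
            calc ∑ i ∈ (Finset.univ.erase t).erase z, c (leaf i j)
                ≤ ∑ _i ∈ (Finset.univ.erase t).erase z, 1 :=
                  Finset.sum_le_sum (fun i hi => hxle i (Finset.mem_of_mem_erase hi))
              _ = n - 2 := by
                  rw [Finset.sum_const, smul_eq_mul, Finset.card_erase_of_mem hzI, card_I]
                  omega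
          omega
    · omega

end Plans

end BookAux

lemma mem_pebblingSet_bookGraph {n : ℕ} (hn : 2 ≤ n) :
    (2 * n + 4) ∈ pebblingSet (bookGraph n) 1 := by
  intro c hsum r
  obtain ⟨rs, rj⟩ := r
  cases rs with
  | inl a =>
    obtain rfl : a = 0 := Subsingleton.elim a 0
    rcases BookAux.fin2_cases rj with rfl | rfl
    · exact BookAux.solvable_hub (j' := 1) (by decide) hsum
    · exact BookAux.solvable_hub (j' := 0) (by decide) hsum
  | inr i =>
    rcases BookAux.fin2_cases rj with rfl | rfl
    · exact BookAux.solvable_leaf (j' := 1) (by decide) i hn hsum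
    · exact BookAux.solvable_leaf (j' := 0) (by decide) i hn hsum


end PebblingAux

/-- For `n ≥ 2`, the pebbling number of the book graph `B n` is `2n + 4`. -/
theorem pebblingNumber_bookGraph (n : ℕ) (hn : 2 ≤ n) :
    pebblingNumber (bookGraph n) 1 = ((2 * n + 4 : ℕ) : ℕ∞) := by
  refine le_antisymm ?_ ?_
  · exact sInf_le ⟨2 * n + 4, mem_pebblingSet_bookGraph hn, rfl⟩
  · refine le_sInf ?_
    rintro b ⟨m, hm, rfl⟩
    refine Nat.cast_le.mpr ?_
    by_contra hlt
    push_neg at hlt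
    have h0n : 0 < n := by omega
    obtain ⟨c', hle, hsc⟩ := exists_sub_config (2 * n + 3 - m) (BookAux.c0 n) m
      (by rw [BookAux.sum_c0 hn]; omega)
    obtain ⟨cf, hr, hge⟩ := hm c' hsc (BookAux.leaf ⟨0, h0n⟩ 0)
    have h1 := BookAux.Psi_reach hr
    have h2 := BookAux.Psi_mono hle
    have h3 := BookAux.Psi_c0 (n := n) hn
    have h4 := BookAux.Psi_ge cf h0n
    omega
end

section
/- For n ≥ 4 and any graph G, the neighbourhood corona K_n ⋆ G is Class 0: its pebbling number equals its number of vertices, n + n|V(G)|. -/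
open SimpleGraph

variable {V : Type*}

variable [Fintype V]

/-- The neighbourhood corona `G ⋆ H`. -/
def ncoronaProd {α β : Type*} (G : SimpleGraph α) (H : SimpleGraph β) :
    SimpleGraph (α ⊕ α × β) :=
  SimpleGraph.fromRel (fun u v =>
    match u, v with
    | Sum.inl a, Sum.inl b => G.Adj a b
    | Sum.inl a, Sum.inr p => G.Adj a p.1
    | Sum.inr p, Sum.inr q => p.1 = q.1 ∧ H.Adj p.2 q.2
    | _, _ => False)

/-!
Every three vertices of `K_n ⋆ G` have a common neighbour: a vertex of `K_n` outside the (at most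
three) copies they lie in, which exists as `n ≥ 4`. In any such graph `|V|` pebbles suffice. If the
target `r` is empty then, by pigeonhole, some vertex `u` carries two pebbles. Four pebbles on `u`, or
two on each of two vertices, can be gathered as two pebbles on a common neighbour of `r` and those
vertices, and then moved to `r`. Otherwise `u` carries two or three pebbles, every other vertex at
most one, and `u` and `r` have two common neighbours `w₁, w₂` (a common neighbour of `u`, `r`, `w₁`
differs from `w₁`); if one of them holds a pebble, moving from `u` onto it and then onto `r` works,
and if both are empty the total is at most `|V| - 1`. Conversely, `|V| - 1` pebbles placed one per
vertex away from `r` admit no move at all.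
-/

section Moves

variable {α : Type*} {Γ : SimpleGraph α} {c : α → ℕ} {u u₁ u₂ w r : α} {t : ℕ}

open Classical in
noncomputable def moveConfig (c : α → ℕ) (u v : α) : α → ℕ :=
  Function.update (Function.update c u (c u - 2)) v (c v + 1)

lemma pebblingMove_moveConfig (huw : Γ.Adj u w) (hu : 2 ≤ c u) :
    PebblingMove Γ c (moveConfig c u w) :=
  ⟨u, w, huw, hu, by simp [moveConfig, huw.ne], by simp [moveConfig],
    fun x hxu hxw => by simp [moveConfig, hxu, hxw]⟩

lemma PebblingSolvable.of_le (h : t ≤ c r) : PebblingSolvable Γ c r t :=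
  ⟨c, .refl, h⟩

lemma PebblingSolvable.of_moveConfig (huw : Γ.Adj u w) (hu : 2 ≤ c u)
    (h : PebblingSolvable Γ (moveConfig c u w) r t) : PebblingSolvable Γ c r t :=
  let ⟨c', hreach, hc'⟩ := h
  ⟨c', .head (pebblingMove_moveConfig huw hu) hreach, hc'⟩

lemma pebblingSolvable_of_adj (hur : Γ.Adj u r) (hu : 2 ≤ c u) : PebblingSolvable Γ c r 1 :=
  .of_moveConfig hur hu (.of_le (by simp [moveConfig]))

lemma pebblingSolvable_of_adj_adj (huw : Γ.Adj u w) (hwr : Γ.Adj w r) (hu : 2 ≤ c u)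
    (hw : 1 ≤ c w) : PebblingSolvable Γ c r 1 :=
  .of_moveConfig huw hu (pebblingSolvable_of_adj hwr (by simp [moveConfig]; omega))

lemma pebblingSolvable_of_adj_adj_of_four_le (huw : Γ.Adj u w) (hwr : Γ.Adj w r)
    (hu : 4 ≤ c u) : PebblingSolvable Γ c r 1 :=
  .of_moveConfig huw (by omega) <|
    .of_moveConfig huw (by simp [moveConfig, huw.ne]; omega) <|
      pebblingSolvable_of_adj hwr (by simp [moveConfig])

lemma pebblingSolvable_of_adj_adj_adj (hu₁w : Γ.Adj u₁ w) (hu₂w : Γ.Adj u₂ w)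
    (hwr : Γ.Adj w r) (hu : u₁ ≠ u₂) (hu₁ : 2 ≤ c u₁) (hu₂ : 2 ≤ c u₂) :
    PebblingSolvable Γ c r 1 :=
  .of_moveConfig hu₁w hu₁ <|
    .of_moveConfig hu₂w (by simp [moveConfig, hu.symm, hu₂w.ne, hu₂]) <|
      pebblingSolvable_of_adj hwr (by simp [moveConfig])

lemma eq_of_pebblingReach_of_le_one {c' : α → ℕ} (hc : ∀ v, c v ≤ 1)
    (h : PebblingReach Γ c c') : c' = c := by
  rcases h.cases_head with h | ⟨_, ⟨u, _, _, hu, _⟩, _⟩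
  · exact h.symm
  · exact absurd (hc u) (by omega)

end Moves

section Counting

variable {α : Type*} [Fintype α] [DecidableEq α] {c : α → ℕ}

lemma sum_add_card_lt_of_le_one {u : α} {s : Finset α} (hus : u ∉ s) (hs : ∀ v ∈ s, c v = 0)
    (hle : ∀ v, v ≠ u → c v ≤ 1) : ∑ v, c v + s.card < c u + Fintype.card α := by
  have hsub : s ⊆ Finset.univ.erase u := fun v hv =>
    Finset.mem_erase.mpr ⟨fun h => hus (h ▸ hv), Finset.mem_univ v⟩
  have hrest : ∑ v ∈ Finset.univ.erase u \ s, c v ≤ (Finset.univ.erase u \ s).card := by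
    simpa using Finset.sum_le_card_nsmul _ c 1 fun v hv =>
      hle v (Finset.mem_erase.mp (Finset.mem_sdiff.mp hv).1).1
  have hsum : ∑ v, c v = c u + ∑ v ∈ Finset.univ.erase u \ s, c v := by
    rw [← Finset.add_sum_erase _ _ (Finset.mem_univ u), ← Finset.sum_sdiff hsub,
      Finset.sum_eq_zero hs, add_zero]
  have hcard := Finset.card_sdiff_add_card_eq_card hsub
  have hcard_erase := Finset.card_erase_add_one (Finset.mem_univ u)
  rw [Finset.card_univ] at hcard_erase
  omega

lemma exists_two_le_of_sum_eq_card {r : α} (hsum : ∑ v, c v = Fintype.card α) (hr : c r = 0) :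
    ∃ u, 2 ≤ c u := by
  by_contra! h
  have := sum_add_card_lt_of_le_one (c := c) (Finset.notMem_empty r) (by simp) fun v _ =>
    Nat.le_of_lt_succ (h v)
  simp only [Finset.card_empty, add_zero, hsum, hr, zero_add, lt_self_iff_false] at this

end Counting

section ClassZero

variable {α : Type*} [Fintype α] {Γ : SimpleGraph α}

theorem not_mem_pebblingSet_of_lt_card {m : ℕ} (hm : m < Fintype.card α) :
    m ∉ pebblingSet Γ 1 := by
  classical
  obtain ⟨r⟩ : Nonempty α := Fintype.card_pos_iff.mp (by omega)
  obtain ⟨s, hsr, hs⟩ := Finset.exists_subset_card_eq (s := Finset.univ.erase r) (n := m)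
    (by rw [Finset.card_erase_of_mem (Finset.mem_univ r), Finset.card_univ]; omega)
  intro hmem
  obtain ⟨c', hreach, hc'⟩ := hmem (fun v => if v ∈ s then 1 else 0) (by simp [hs]) r
  rw [eq_of_pebblingReach_of_le_one (fun v => by split_ifs <;> omega) hreach] at hc'
  have hrs : r ∉ s := fun h => by simpa using hsr h
  simp [hrs] at hc'

theorem pebblingNumber_eq_card_of_card_mem (h : Fintype.card α ∈ pebblingSet Γ 1) :
    pebblingNumber Γ 1 = Fintype.card α :=
  le_antisymm (sInf_le ⟨_, h, rfl⟩) <| le_sInf fun _ ⟨_, hm, hb⟩ =>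
    hb ▸ Nat.cast_le.mpr (not_lt.mp fun hlt => not_mem_pebblingSet_of_lt_card hlt hm)

theorem card_mem_pebblingSet_of_exists_common_adj
    (h : ∀ x y z, ∃ w, Γ.Adj x w ∧ Γ.Adj y w ∧ Γ.Adj z w) :
    Fintype.card α ∈ pebblingSet Γ 1 := by
  classical
  intro c hsum r
  by_cases hr : 1 ≤ c r
  · exact .of_le hr
  by_cases h4 : ∃ u, 4 ≤ c u
  · obtain ⟨u, hu⟩ := h4
    obtain ⟨w, huw, -, hrw⟩ := h u r r
    exact pebblingSolvable_of_adj_adj_of_four_le huw hrw.symm hu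
  by_cases h22 : ∃ u₁ u₂, u₁ ≠ u₂ ∧ 2 ≤ c u₁ ∧ 2 ≤ c u₂
  · obtain ⟨u₁, u₂, hne, hu₁, hu₂⟩ := h22
    obtain ⟨w, hu₁w, hu₂w, hrw⟩ := h u₁ u₂ r
    exact pebblingSolvable_of_adj_adj_adj hu₁w hu₂w hrw.symm hne hu₁ hu₂
  push Not at h4 h22
  obtain ⟨u, hu⟩ := exists_two_le_of_sum_eq_card (r := r) hsum (by omega)
  obtain ⟨w₁, huw₁, -, hrw₁⟩ := h u r r
  obtain ⟨w₂, huw₂, hrw₂, hw₁w₂⟩ := h u r w₁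
  by_cases hw₁ : 1 ≤ c w₁
  · exact pebblingSolvable_of_adj_adj huw₁ hrw₁.symm hu hw₁
  by_cases hw₂ : 1 ≤ c w₂
  · exact pebblingSolvable_of_adj_adj huw₂ hrw₂.symm hu hw₂
  have hu₃ := h4 u
  have hur : u ≠ r := by rintro rfl; omega
  have hcount := sum_add_card_lt_of_le_one (c := c) (u := u) (s := {r, w₁, w₂})
    (by simp [hur, huw₁.ne, huw₂.ne])
    (by simp only [Finset.mem_insert, Finset.mem_singleton, forall_eq_or_imp, forall_eq]; omega)
    fun v hv => by have := h22 v u hv; omega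
  rw [Finset.card_insert_of_notMem (by simp [hrw₁.ne, hrw₂.ne]),
    Finset.card_pair hw₁w₂.ne] at hcount
  omega

end ClassZero

lemma ncoronaProd_top_adj_inl {n : ℕ} {β : Type*} (G : SimpleGraph β) {a : Fin n}
    {v : Fin n ⊕ Fin n × β} (h : a ≠ Sum.elim id Prod.fst v) :
    (ncoronaProd (⊤ : SimpleGraph (Fin n)) G).Adj (Sum.inl a) v := by
  rw [ncoronaProd, fromRel_adj]
  cases v with
  | inl b => exact ⟨Sum.inl_injective.ne h, Or.inl h⟩
  | inr p => exact ⟨Sum.inl_ne_inr, Or.inl h⟩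

lemma ncoronaProd_top_exists_common_adj {n : ℕ} (hn : 4 ≤ n) {β : Type*} (G : SimpleGraph β)
    (x y z : Fin n ⊕ Fin n × β) :
    ∃ w, (ncoronaProd (⊤ : SimpleGraph (Fin n)) G).Adj x w ∧
      (ncoronaProd ⊤ G).Adj y w ∧ (ncoronaProd ⊤ G).Adj z w := by
  classical
  let i : Fin n ⊕ Fin n × β → Fin n := Sum.elim id Prod.fst
  obtain ⟨a, -, ha⟩ := Finset.exists_mem_notMem_of_card_lt_card
    (s := {i x, i y, i z}) (t := Finset.univ)
    (Finset.card_le_three.trans_lt (by simp; omega))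
  simp only [Finset.mem_insert, Finset.mem_singleton, not_or] at ha
  exact ⟨Sum.inl a, (ncoronaProd_top_adj_inl G ha.1).symm,
    (ncoronaProd_top_adj_inl G ha.2.1).symm, (ncoronaProd_top_adj_inl G ha.2.2).symm⟩

/-- For `n ≥ 4`, the neighbourhood corona `K n ⋆ G` is Class 0: its pebbling number
equals its order `n + n |V(G)|`. -/
theorem pebblingNumber_Kn_ncorona (n : ℕ) (hn : 4 ≤ n)
    {β : Type*} [Fintype β] (G : SimpleGraph β) :
    pebblingNumber (ncoronaProd (⊤ : SimpleGraph (Fin n)) G) 1 =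
      ((n + n * Fintype.card β : ℕ) : ℕ∞) := by
  rw [pebblingNumber_eq_card_of_card_mem
    (card_mem_pebblingSet_of_exists_common_adj (ncoronaProd_top_exists_common_adj hn G))]
  simp
end
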